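/- Define u(γ) = γ·Φ(γ) + φ(γ) for γ ∈ ℝ, where φ and Φ are the standard normal density and CDF. If γ₁ > γ₂, then there exists C₀ ≥ max(−γ₁, −γ₂, 0) such that for every C > C₀ one has u(γ₁)/(γ₁ + C) > u(γ₂)/(γ₂ + C). Explicitly, any C₀ ≥ max((γ₁·u(γ₂) − γ₂·u(γ₁))/(u(γ₁) − u(γ₂)), −γ₂, 0) works. -/

import Mathlib

open MeasureTheory Set

/-- The standard normal density `φ`. -/
noncomputable def stdNormalPdf (x : ℝ) : ℝ :=
  Real.exp (-x ^ 2 / 2) / Real.sqrt (2 * Real.pi)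

/-- The standard normal CDF `Φ`. -/
noncomputable def stdNormalCdf (x : ℝ) : ℝ :=
  ∫ t in Set.Iic x, stdNormalPdf t

/-- `u(γ) = γΦ(γ) + φ(γ)`, the mean of the rectified Gaussian `max(X,0)` for
`X ~ N(γ,1)`. -/
noncomputable def rectMean (γ : ℝ) : ℝ := γ * stdNormalCdf γ + stdNormalPdf γ

lemma stdNormalPdf_pos (x : ℝ) : 0 < stdNormalPdf x := by
  unfold stdNormalPdf
  positivity

lemma stdNormalPdf_eq (x : ℝ) :
    stdNormalPdf x = Real.exp (-(1/2 : ℝ) * x ^ 2) / Real.sqrt (2 * Real.pi) := by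
  unfold stdNormalPdf; ring_nf

lemma integrable_stdNormalPdf : Integrable stdNormalPdf := by
  have := (integrable_exp_neg_mul_sq (b := (1/2 : ℝ)) (by norm_num)).div_const
    (Real.sqrt (2 * Real.pi))
  exact this.congr (by
    filter_upwards with x
    rw [stdNormalPdf_eq])

lemma integrable_id_mul_stdNormalPdf : Integrable (fun t : ℝ => t * stdNormalPdf t) := by
  have := (integrable_mul_exp_neg_mul_sq (b := (1/2 : ℝ)) (by norm_num)).div_const
    (Real.sqrt (2 * Real.pi))
  exact this.congr (by
    filter_upwards with x
    rw [stdNormalPdf_eq]; ring)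

lemma stdNormalCdf_pos (x : ℝ) : 0 < stdNormalCdf x := by
  rw [stdNormalCdf]
  apply (setIntegral_pos_iff_support_of_nonneg_ae
      (Filter.Eventually.of_forall fun t => (stdNormalPdf_pos t).le)
      integrable_stdNormalPdf.integrableOn).mpr
  have : (Function.support stdNormalPdf) = Set.univ := by
    ext t; simp [Function.mem_support, (stdNormalPdf_pos t).ne']
  rw [this, Set.univ_inter]
  simp [Real.volume_Iic]

lemma hasDerivAt_neg_stdNormalPdf (x : ℝ) :
    HasDerivAt (fun t => -stdNormalPdf t) (x * stdNormalPdf x) x := by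
  have h1 : HasDerivAt (fun t : ℝ => -t ^ 2 / 2) (-x) x := by
    have : HasDerivAt (fun t : ℝ => -t ^ 2 / 2) (-((2 : ℕ) * x ^ (2 - 1)) / 2) x :=
      ((hasDerivAt_pow 2 x).neg).div_const 2
    convert this using 1; push_cast; ring
  have h2 : HasDerivAt (fun t : ℝ => Real.exp (-t ^ 2 / 2))
      (Real.exp (-x ^ 2 / 2) * (-x)) x := h1.exp
  have h3 := (h2.div_const (Real.sqrt (2 * Real.pi))).neg
  have hv : x * stdNormalPdf x = -(Real.exp (-x ^ 2 / 2) * (-x) / Real.sqrt (2 * Real.pi)) := by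
    rw [stdNormalPdf]; ring
  rw [hv]
  exact h3

lemma tendsto_neg_stdNormalPdf_atBot :
    Filter.Tendsto (fun t => -stdNormalPdf t) Filter.atBot (nhds 0) := by
  have hsq : Filter.Tendsto (fun t : ℝ => t ^ 2) Filter.atBot Filter.atTop := by
    have hev : (fun x : ℝ => -x) ≤ᶠ[Filter.atBot] fun x => x ^ 2 := by
      filter_upwards [Filter.eventually_le_atBot (-1 : ℝ)] with x hx
      nlinarith
    exact Filter.tendsto_atTop_mono' _ hev Filter.tendsto_neg_atBot_atTop
  have h1 : Filter.Tendsto (fun t : ℝ => -t ^ 2 / 2) Filter.atBot Filter.atBot :=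
    (Filter.tendsto_neg_atTop_atBot.comp hsq).atBot_div_const (by norm_num)
  have h2 : Filter.Tendsto (fun t : ℝ => Real.exp (-t ^ 2 / 2)) Filter.atBot (nhds 0) :=
    Real.tendsto_exp_atBot.comp h1
  have := (h2.div_const (Real.sqrt (2 * Real.pi))).neg
  simpa [stdNormalPdf] using this

lemma integral_id_mul_stdNormalPdf (γ : ℝ) :
    ∫ t in Set.Iic γ, t * stdNormalPdf t = -stdNormalPdf γ := by
  have := integral_Iic_of_hasDerivAt_of_tendsto' (a := γ)
    (f := fun t => -stdNormalPdf t) (f' := fun t => t * stdNormalPdf t) (m := 0)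
    (fun x _ => hasDerivAt_neg_stdNormalPdf x)
    integrable_id_mul_stdNormalPdf.integrableOn
    tendsto_neg_stdNormalPdf_atBot
  simpa using this

lemma integral_sub_mul_stdNormalPdf (c a : ℝ) :
    ∫ t in Set.Iic a, (c - t) * stdNormalPdf t = c * stdNormalCdf a + stdNormalPdf a := by
  have h1 : IntegrableOn (fun t : ℝ => c * stdNormalPdf t) (Set.Iic a) :=
    (integrable_stdNormalPdf.const_mul c).integrableOn
  have h2 : IntegrableOn (fun t : ℝ => t * stdNormalPdf t) (Set.Iic a) :=
    integrable_id_mul_stdNormalPdf.integrableOn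
  have : ∫ t in Set.Iic a, (c - t) * stdNormalPdf t
      = (∫ t in Set.Iic a, c * stdNormalPdf t) - ∫ t in Set.Iic a, t * stdNormalPdf t := by
    rw [← integral_sub h1 h2]
    congr 1; ext t; ring
  rw [this, integral_id_mul_stdNormalPdf, integral_const_mul, stdNormalCdf]
  ring

lemma rectMean_eq (γ : ℝ) :
    rectMean γ = ∫ t in Set.Iic γ, (γ - t) * stdNormalPdf t := by
  rw [integral_sub_mul_stdNormalPdf, rectMean]

lemma integrableOn_sub_mul (c a : ℝ) :
    IntegrableOn (fun t : ℝ => (c - t) * stdNormalPdf t) (Set.Iic a) := by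
  have := ((integrable_stdNormalPdf.const_mul c).sub integrable_id_mul_stdNormalPdf)
  exact (this.congr (by filter_upwards with t; simp only [Pi.sub_apply]; ring)).integrableOn

lemma rectMean_ge (γ a : ℝ) (ha : a ≤ γ) :
    γ * stdNormalCdf a + stdNormalPdf a ≤ rectMean γ := by
  rw [rectMean_eq, ← integral_sub_mul_stdNormalPdf γ a]
  apply setIntegral_mono_set (integrableOn_sub_mul γ γ)
  · filter_upwards [self_mem_ae_restrict measurableSet_Iic] with t ht
    have h1 : t ≤ γ := ht
    have h2 := (stdNormalPdf_pos t).le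
    simp only [Pi.zero_apply]
    nlinarith
  · exact HasSubset.Subset.eventuallyLE (Set.Iic_subset_Iic.mpr ha)

lemma rectMean_pos (γ : ℝ) : 0 < rectMean γ := by
  have h := rectMean_ge γ (γ - 1) (by linarith)
  have h2 : stdNormalCdf (γ - 1) ≤ γ * stdNormalCdf (γ - 1) + stdNormalPdf (γ - 1) := by
    rw [← integral_sub_mul_stdNormalPdf γ (γ - 1), stdNormalCdf]
    apply setIntegral_mono_on integrable_stdNormalPdf.integrableOn
      (integrableOn_sub_mul γ (γ - 1)) measurableSet_Iic
    intro t ht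
    have h3 : t ≤ γ - 1 := ht
    have := (stdNormalPdf_pos t).le
    nlinarith
  have := stdNormalCdf_pos (γ - 1)
  linarith

lemma rectMean_lt (γ₂ γ₁ : ℝ) (h : γ₂ < γ₁) : rectMean γ₂ < rectMean γ₁ := by
  have h1 := rectMean_ge γ₁ γ₂ h.le
  have h2 : rectMean γ₂ + (γ₁ - γ₂) * stdNormalCdf γ₂
      = γ₁ * stdNormalCdf γ₂ + stdNormalPdf γ₂ := by
    rw [rectMean]; ring
  have h3 := stdNormalCdf_pos γ₂
  nlinarith

/-- Analytic core of Proposition 3.1: if `γ₁ > γ₂`, then there exists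
`C₀ ≥ max(−γ₁, −γ₂, 0)` such that for every `C > C₀`,
`u(γ₁)/(γ₁ + C) > u(γ₂)/(γ₂ + C)`; explicitly, any
`C₀ ≥ max((γ₁·u(γ₂) − γ₂·u(γ₁))/(u(γ₁) − u(γ₂)), −γ₂, 0)` works. -/
theorem beta_exact_gt_of_large_C (γ₁ γ₂ : ℝ) (h : γ₁ > γ₂) :
    (∃ C₀ : ℝ, max (max (-γ₁) (-γ₂)) 0 ≤ C₀ ∧
        ∀ C : ℝ, C > C₀ →
          rectMean γ₁ / (γ₁ + C) > rectMean γ₂ / (γ₂ + C)) ∧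
      ∀ C₀ : ℝ,
        max (max ((γ₁ * rectMean γ₂ - γ₂ * rectMean γ₁) /
              (rectMean γ₁ - rectMean γ₂)) (-γ₂)) 0 ≤ C₀ →
          ∀ C : ℝ, C > C₀ →
            rectMean γ₁ / (γ₁ + C) > rectMean γ₂ / (γ₂ + C) := by
  set u₁ := rectMean γ₁ with hu₁
  set u₂ := rectMean γ₂ with hu₂
  have hd : 0 < u₁ - u₂ := sub_pos.mpr (rectMean_lt γ₂ γ₁ h)
  have hp1 : 0 < u₁ := rectMean_pos γ₁
  have hp2 : 0 < u₂ := rectMean_pos γ₂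
  set T := (γ₁ * u₂ - γ₂ * u₁) / (u₁ - u₂) with hT
  have main : ∀ C₀ : ℝ, max (max T (-γ₂)) 0 ≤ C₀ →
      ∀ C : ℝ, C > C₀ → u₁ / (γ₁ + C) > u₂ / (γ₂ + C) := by
    intro C₀ hC₀ C hC
    have hg2 : -γ₂ ≤ C₀ := le_trans (le_trans (le_max_right _ _) (le_max_left _ _)) hC₀
    have hTle : T ≤ C₀ := le_trans (le_trans (le_max_left _ _) (le_max_left _ _)) hC₀
    have hden2 : 0 < γ₂ + C := by linarith
    have hden1 : 0 < γ₁ + C := by linarith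
    rw [gt_iff_lt, div_lt_div_iff₀ hden2 hden1]
    have hTC : T < C := lt_of_le_of_lt hTle hC
    have : T * (u₁ - u₂) = γ₁ * u₂ - γ₂ * u₁ := div_mul_cancel₀ _ hd.ne'
    nlinarith [mul_lt_mul_of_pos_right hTC hd]
  constructor
  · refine ⟨max (max (max (-γ₁) (-γ₂)) 0) (max (max T (-γ₂)) 0), le_max_left _ _, ?_⟩
    intro C hC
    exact main _ (le_max_right _ _) C hC
  · exact main
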